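/- Assume the simultaneous Doeblin condition, fix α ∈ (0,1), and suppose J*(λ,·) is not constant. Let ε ∈ (0,ξ), let i ≥ 1, let x ∈ G_i, and suppose π ∈ 𝒫 is ε-optimal at x. Then P_x^π[ X_{T_{G_i^c}} ∈ ⋃_{k=0}^{i−1} G_k ] = 1; that is, with probability one the system exits G_i into a strictly lower level set of J*(λ,·). -/

import Mathlib

open scoped Classical BigOperators ENNReal

namespace RiskSensitive

/-- A (history-dependent, randomized) policy for a finite MDP: given the past
(chronological list of (state, action) pairs) and the current state, it assigns a
probability weight to each action, concentrated on the admissible actions. -/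
structure Policy (S A : Type*) [Fintype S] [Fintype A] (Adm : S → Finset A) where
  toFun : List (S × A) → S → A → ℝ
  nonneg : ∀ h s a, 0 ≤ toFun h s a
  sum_one : ∀ h s, ∑ a, toFun h s a = 1
  supp : ∀ h s a, a ∉ Adm s → toFun h s a = 0

variable {S A : Type*} [Fintype S] [Fintype A]
variable (Adm : S → Finset A) (p : S → A → S → ℝ) (C : S → A → ℝ) (lam : ℝ)

/-- Probability of a finite trajectory (list of (action, next-state) pairs), given the
history so far and the current state. -/
noncomputable def pathProbAux (π : Policy S A Adm) :
    List (S × A) → S → List (A × S) → ℝ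
  | _, _, [] => 1
  | hist, x, (a, y) :: rest =>
      π.toFun hist x a * p x a y * pathProbAux π (hist ++ [(x, a)]) y rest

/-- `pathProb π x l` is `P_x^π[A_0 = a_0, X_1 = y_1, …]` for `l = [(a_0,y_1),…]`. -/
noncomputable def pathProb (π : Policy S A Adm) (x : S) (l : List (A × S)) : ℝ :=
  pathProbAux Adm p π [] x l

/-- Probability of a cylinder event depending on the first `n` (action, next-state) pairs. -/
noncomputable def cylProb (π : Policy S A Adm) (x : S) (n : ℕ)
    (E : (Fin n → A × S) → Prop) : ℝ :=
  ∑ v : Fin n → A × S, if E v then pathProb Adm p π x (List.ofFn v) else 0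

/-- The state `X_t` along the trajectory encoded by `l`, starting from `x`. -/
def stateAt (x : S) (l : List (A × S)) (t : ℕ) : S :=
  (l.take t).foldl (fun _ q => q.2) x

/-- The final state of the finite trajectory `l` started at `x`. -/
def lastState (x : S) (l : List (A × S)) : S :=
  l.foldl (fun _ q => q.2) x

/-- `Σ_t w(X_t, A_t)` along the finite trajectory `l` started at `x`. -/
def costSum (w : S → A → ℝ) : S → List (A × S) → ℝ
  | _, [] => 0
  | x, (a, y) :: rest => w x a + costSum w y rest

/-- `J_n(λ,π,x) = (1/λ) log E_x^π[exp(λ Σ_{t<n} C(X_t,A_t))]`. -/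
noncomputable def Jn (π : Policy S A Adm) (x : S) (n : ℕ) : ℝ :=
  (1 / lam) * Real.log (∑ v : Fin n → A × S,
    pathProb Adm p π x (List.ofFn v) * Real.exp (lam * costSum C x (List.ofFn v)))

/-- The risk-sensitive average cost `J(λ,π,x) = limsup_n J_n(λ,π,x)/n`. -/
noncomputable def Javg (π : Policy S A Adm) (x : S) : ℝ :=
  Filter.limsup (fun n : ℕ => Jn Adm p C lam π x n / n) Filter.atTop

/-- Optimal risk-sensitive average cost `J*(λ,x)`. -/
noncomputable def Jopt (x : S) : ℝ :=
  ⨅ π : Policy S A Adm, Javg Adm p C lam π x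

/-- `π` is `ε`-optimal at `x`. -/
def EpsOptimalAt (π : Policy S A Adm) (x : S) (ε : ℝ) : Prop :=
  Javg Adm p C lam π x ≤ Jopt Adm p C lam x + ε

/-- `FirstExit Q v` : the trajectory `v` leaves `{Q}` for the first time exactly at its
last step, i.e. the exit time of `Q` equals `n`. -/
def FirstExit (Q : S → Prop) {n : ℕ} (v : Fin n → A × S) : Prop :=
  0 < n ∧ (∀ t : Fin n, (t : ℕ) + 1 < n → Q (v t).2) ∧
    ∀ t : Fin n, (t : ℕ) + 1 = n → ¬ Q (v t).2

/-- `E_x^π[ exp(Σ_{t<τ} w(X_t,A_t)) ]` where `τ = min{n ≥ 1 : ¬ Q (X_n)}` is the first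
exit time from `Q` (the contribution of `[τ = ∞]` is null when `τ < ∞` a.s.). -/
noncomputable def EexitExp (π : Policy S A Adm) (x : S) (Q : S → Prop)
    (w : S → A → ℝ) : ℝ≥0∞ :=
  ∑' n : ℕ, ∑ v : Fin n → A × S,
    if FirstExit Q v then
      ENNReal.ofReal (pathProb Adm p π x (List.ofFn v) *
        Real.exp (costSum w x (List.ofFn v)))
    else 0

/-- `E_x^π[ exp(Σ_{t<T} w(X_t,A_t)) ]` with `T` the first positive arrival time to `z`. -/
noncomputable def EhitExp (π : Policy S A Adm) (x z : S) (w : S → A → ℝ) : ℝ≥0∞ :=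
  EexitExp Adm p π x (fun y => y ≠ z) w

/-- `E_x^π[T]`, the expected first positive arrival time to `z`, computed as
`Σ_{n≥0} P_x^π[T > n]`. -/
noncomputable def ExpT (π : Policy S A Adm) (x z : S) : ℝ≥0∞ :=
  ∑' n : ℕ, ENNReal.ofReal
    (cylProb Adm p π x n (fun v => ∀ t : Fin n, (v t).2 ≠ z))

/-- `P_x^π[T > n]`, the probability that `z` is not visited during the first `n` steps. -/
noncomputable def survProb (π : Policy S A Adm) (x z : S) (n : ℕ) : ℝ :=
  cylProb Adm p π x n (fun v => ∀ t : Fin n, (v t).2 ≠ z)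

/-- The stationary policy induced by a choice function `f ∈ 𝔽`. -/
noncomputable def stationary (f : S → A) (hf : ∀ s, f s ∈ Adm s) : Policy S A Adm where
  toFun := fun _ s a => if a = f s then 1 else 0
  nonneg := by intro h s a; (try dsimp only); split <;> norm_num
  sum_one := by intro h s; simp
  supp := by
    intro h s a ha
    try dsimp only
    rw [if_neg]
    intro hEq
    exact ha (hEq ▸ hf s)

/-- The simultaneous Doeblin condition: `E_x^f[T] ≤ M` for every state `x` and every
stationary policy `f`, where `T` is the first positive arrival time to `z`. -/
def Doeblin (z : S) (M : ℝ) : Prop :=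
  0 < M ∧ ∀ (x : S) (f : S → A) (hf : ∀ s, f s ∈ Adm s),
    ExpT Adm p (stationary Adm f hf) x z ≤ ENNReal.ofReal M

/-- `B_g(x) = {a ∈ A(x) : g(x) = max{g(y) : p_{xy}(a) > 0}}`. -/
def Bg (g : S → ℝ) (x : S) : Set A :=
  {a | a ∈ Adm x ∧ g x = sSup (g '' {y | 0 < p x a y})}

/-- The family `𝒢` of functions characterizing `J*(λ,·)`. -/
def Gclass : Set (S → ℝ) :=
  {g | (∀ x, g x = sInf ((fun a => sSup (g '' {y | 0 < p x a y})) '' (Adm x : Set A))) ∧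
    ∃ h : S → ℝ, ∀ x,
      sInf ((fun a => Real.exp (lam * C x a) * ∑ y, p x a y * Real.exp (lam * h y)) ''
        Bg Adm p g x) ≤ Real.exp (lam * g x + lam * h x)}

/-- The class `𝒫*` of policies which always select actions in `B*(X_t)`. -/
def Pstar : Set (Policy S A Adm) :=
  {π | ∀ (x : S) (t : ℕ),
    cylProb Adm p π x (t + 1)
      (fun v => (v (Fin.last t)).1 ∈
        Bg Adm p (Jopt Adm p C lam) (stateAt x (List.ofFn v) t)) = 1}

/-- The deviation function
`h(x) = inf_{π ∈ 𝒫*} (1/λ) log E_x^π[exp(λα Σ_{t<T}(C(X_t,A_t) − J*(λ,X_t)))]`. -/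
noncomputable def hdev (z : S) (α : ℝ) (x : S) : EReal :=
  ⨅ π ∈ Pstar Adm p C lam, ((lam⁻¹ : ℝ) : EReal) *
    ENNReal.log (EhitExp Adm p π x z
      (fun s a => lam * α * (C s a - Jopt Adm p C lam s)))

/-- `ψ(ε) = (1/λ) inf_{δ∈𝒫*} log E_z^δ[exp(λ Σ_{t<T}(C(X_t,A_t) − γ₀ − 2ε))]`. -/
noncomputable def psi (z : S) (ε : ℝ) : EReal :=
  ((lam⁻¹ : ℝ) : EReal) * ⨅ π ∈ Pstar Adm p C lam,
    ENNReal.log (EhitExp Adm p π z z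
      (fun s a => lam * (C s a - Jopt Adm p C lam z - 2 * ε)))

/-- `ξ₀ = −(1−α) log β / (λα)`. -/
noncomputable def xi0 (α β : ℝ) : ℝ := -((1 - α) * Real.log β) / (lam * α)

/-- `ξ₁`: 1 if `J*(λ,·)` is constant, otherwise the minimum gap between distinct
values of `J*(λ,·)`. -/
noncomputable def xi1 : ℝ :=
  if ∀ u v : S, Jopt Adm p C lam u = Jopt Adm p C lam v then 1
  else sInf {d | ∃ u v : S, Jopt Adm p C lam u < Jopt Adm p C lam v ∧
    d = Jopt Adm p C lam v - Jopt Adm p C lam u}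

/-- `ξ = min{ξ₀, ξ₁}`. -/
noncomputable def xi (α β : ℝ) : ℝ := min (xi0 lam α β) (xi1 Adm p C lam)

/-- The shifted policy obtained by prefixing the fixed history `pre`. -/
def shiftPolicy (π : Policy S A Adm) (pre : List (S × A)) : Policy S A Adm where
  toFun := fun h s a => π.toFun (pre ++ h) s a
  nonneg := fun h s a => π.nonneg _ s a
  sum_one := fun h s => π.sum_one _ s
  supp := fun h s a ha => π.supp _ s a ha

/-- The history (list of (state, action) pairs) along the trajectory `l` started at `x`. -/
def histOf : S → List (A × S) → List (S × A)
  | _, [] => []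
  | x, (a, y) :: rest => (x, a) :: histOf y rest

/-!
If a trajectory prefix from `x` has positive probability under `π`, the policy that continues
`π` after it, started at the endpoint `y` of the prefix, has average cost at most `J(π, x)`: the
prefix changes `J_n` by a bounded amount, which disappears after dividing by `n`. Hence
`J*(y) ≤ J(π, x)`.

Every policy reaches `z` from every state, so `J*(z)` is the minimum of `J*` and `z` lies below
the level of `x`; staying in that level for `n` steps therefore has probability at most
`P[T > n] → 0`, and the exit time is a.s. finite. For an `ε`-optimal `π`,
`J(π, x) ≤ J*(x) + ε < J*(y)` whenever `y` lies in a higher level, because `ε` is smaller than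
the least gap `ξ₁` between levels; so higher levels are reached with probability zero, and the
exit is a.s. into a lower one.
-/

open Filter Topology

def IsStochastic (Adm : S → Finset A) (p : S → A → S → ℝ) : Prop :=
  ∀ (x : S), ∀ a ∈ Adm x, (∀ y, 0 ≤ p x a y) ∧ (∑ y, p x a y) = 1

section Trajectories

omit [Fintype S] [Fintype A]

theorem lastState_cons (x : S) (q : A × S) (l : List (A × S)) :
    lastState x (q :: l) = lastState q.2 l := rfl

theorem lastState_append (x : S) (l₁ l₂ : List (A × S)) :
    lastState x (l₁ ++ l₂) = lastState (lastState x l₁) l₂ := by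
  simp [lastState, List.foldl_append]

theorem lastState_ofFn_last (x : S) {m : ℕ} (v : Fin (m + 1) → A × S) :
    lastState x (List.ofFn v) = (v (Fin.last m)).2 := by
  rw [List.ofFn_succ', List.concat_eq_append, lastState_append]
  rfl

theorem lastState_take_succ (x : S) {n : ℕ} (v : Fin n → A × S) (t : Fin n) :
    lastState x ((List.ofFn v).take (t + 1)) = (v t).2 := by
  rw [List.take_add_one, List.getElem?_eq_getElem (by simp), lastState_append]
  simp [lastState, List.getElem_ofFn]

theorem stateAt_eq_lastState (x : S) {n : ℕ} (v : Fin n → A × S) :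
    stateAt x (List.ofFn v) n = lastState x (List.ofFn v) := by
  rw [stateAt, List.take_of_length_le (by simp), lastState]

theorem costSum_append (w : S → A → ℝ) :
    ∀ (x : S) (l₁ l₂ : List (A × S)),
      costSum w x (l₁ ++ l₂) = costSum w x l₁ + costSum w (lastState x l₁) l₂
  | x, [], l₂ => by simp [costSum, lastState]
  | x, (a, y) :: rest, l₂ => by
    simp only [List.cons_append, costSum, costSum_append w y rest l₂, lastState_cons, add_assoc]

theorem abs_costSum_le {w : S → A → ℝ} {K : ℝ} (hw : ∀ s a, |w s a| ≤ K) :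
    ∀ (x : S) (l : List (A × S)), |costSum w x l| ≤ l.length * K
  | _, [] => by simp [costSum]
  | x, (a, y) :: rest => by
    rw [costSum, List.length_cons, Nat.cast_succ, add_one_mul]
    linarith [abs_add_le (w x a) (costSum w y rest), hw x a, abs_costSum_le hw y rest]

theorem FirstExit.not_lastState {Q : S → Prop} {n : ℕ} {v : Fin n → A × S}
    (h : FirstExit Q v) (x : S) : ¬Q (lastState x (List.ofFn v)) := by
  obtain ⟨m, rfl⟩ := Nat.exists_eq_add_one_of_ne_zero h.1.ne'
  rw [lastState_ofFn_last]
  exact h.2.2 _ rfl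

end Trajectories

section Paths

variable {Adm p}

theorem pathProbAux_nonneg (hp : IsStochastic Adm p) (π : Policy S A Adm) :
    ∀ (h : List (S × A)) (x : S) (l : List (A × S)), 0 ≤ pathProbAux Adm p π h x l
  | _, _, [] => zero_le_one
  | h, x, (a, y) :: rest => by
    rw [pathProbAux]
    by_cases ha : a ∈ Adm x
    · exact mul_nonneg (mul_nonneg (π.nonneg _ _ _) ((hp x a ha).1 y))
        (pathProbAux_nonneg hp π _ y rest)
    · rw [π.supp _ _ _ ha, zero_mul, zero_mul]

theorem pathProb_nonneg (hp : IsStochastic Adm p) (π : Policy S A Adm) (x : S)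
    (l : List (A × S)) : 0 ≤ pathProb Adm p π x l :=
  pathProbAux_nonneg hp π [] x l

theorem sum_policy_mul_transition_eq_one (hp : IsStochastic Adm p) (π : Policy S A Adm)
    (h : List (S × A)) (x : S) : ∑ q : A × S, π.toFun h x q.1 * p x q.1 q.2 = 1 := by
  rw [Fintype.sum_prod_type, ← π.sum_one h x]
  refine Finset.sum_congr rfl fun a _ => ?_
  dsimp only
  by_cases ha : a ∈ Adm x
  · rw [← Finset.mul_sum, (hp x a ha).2, mul_one]
  · simp [π.supp h x a ha]

theorem sum_pathProbAux_eq_one (hp : IsStochastic Adm p) (n : ℕ) :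
    ∀ (π : Policy S A Adm) (h : List (S × A)) (x : S),
      ∑ v : Fin n → A × S, pathProbAux Adm p π h x (List.ofFn v) = 1 := by
  induction n with
  | zero => intro π h x; simp [pathProbAux]
  | succ n ih =>
    intro π h x
    rw [← (Fin.consEquiv fun _ : Fin (n + 1) => A × S).sum_comp, Fintype.sum_prod_type,
      ← sum_policy_mul_transition_eq_one hp π h x]
    refine Finset.sum_congr rfl fun ⟨a, y⟩ _ => ?_
    simp only [Fin.consEquiv_apply, List.ofFn_succ, Fin.cons_zero, Fin.cons_succ, pathProbAux,
      ← Finset.mul_sum, ih, mul_one]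

theorem sum_pathProb_eq_one (hp : IsStochastic Adm p) (π : Policy S A Adm) (x : S) (n : ℕ) :
    ∑ v : Fin n → A × S, pathProb Adm p π x (List.ofFn v) = 1 :=
  sum_pathProbAux_eq_one hp n π [] x

theorem pathProbAux_shiftPolicy (π : Policy S A Adm) (pre : List (S × A)) :
    ∀ (h : List (S × A)) (x : S) (l : List (A × S)),
      pathProbAux Adm p (shiftPolicy Adm π pre) h x l = pathProbAux Adm p π (pre ++ h) x l
  | _, _, [] => rfl
  | h, x, (a, y) :: rest => by
    simp only [pathProbAux, pathProbAux_shiftPolicy π pre _ y rest, List.append_assoc]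
    rfl

theorem pathProbAux_append (π : Policy S A Adm) :
    ∀ (h : List (S × A)) (x : S) (l₁ l₂ : List (A × S)),
      pathProbAux Adm p π h x (l₁ ++ l₂) =
        pathProbAux Adm p π h x l₁ *
          pathProbAux Adm p π (h ++ histOf x l₁) (lastState x l₁) l₂
  | h, x, [], l₂ => by simp [pathProbAux, histOf, lastState]
  | h, x, (a, y) :: rest, l₂ => by
    simp only [List.cons_append, pathProbAux, histOf, lastState_cons,
      pathProbAux_append π _ y rest l₂, List.append_assoc, List.nil_append, mul_assoc]

theorem pathProb_append (π : Policy S A Adm) (x : S) (l₁ l₂ : List (A × S)) :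
    pathProb Adm p π x (l₁ ++ l₂) =
      pathProb Adm p π x l₁ *
        pathProb Adm p (shiftPolicy Adm π (histOf x l₁)) (lastState x l₁) l₂ := by
  simp only [pathProb, pathProbAux_append, pathProbAux_shiftPolicy, List.nil_append,
    List.append_nil]

theorem pathProb_ne_zero_of_append (π : Policy S A Adm) (x : S) {l₁ l₂ : List (A × S)}
    (h : pathProb Adm p π x (l₁ ++ l₂) ≠ 0) : pathProb Adm p π x l₁ ≠ 0 :=
  left_ne_zero_of_mul (pathProb_append π x l₁ l₂ ▸ h)

end Paths

section Cylinders

variable {Adm p} (hp : IsStochastic Adm p) (π : Policy S A Adm) (x : S)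
include hp

theorem sum_pathProb_mul_mem_Icc {n : ℕ} {g : (Fin n → A × S) → ℝ} {a b : ℝ}
    (hg : ∀ v, g v ∈ Set.Icc a b) :
    ∑ v, pathProb Adm p π x (List.ofFn v) * g v ∈ Set.Icc a b := by
  have hmass := sum_pathProb_eq_one hp π x n
  constructor
  · calc a = ∑ v, pathProb Adm p π x (List.ofFn v) * a := by
          rw [← Finset.sum_mul, hmass, one_mul]
      _ ≤ _ := Finset.sum_le_sum fun v _ =>
          mul_le_mul_of_nonneg_left (hg v).1 (pathProb_nonneg hp π x _)
  · calc _ ≤ ∑ v, pathProb Adm p π x (List.ofFn v) * b :=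
          Finset.sum_le_sum fun v _ =>
            mul_le_mul_of_nonneg_left (hg v).2 (pathProb_nonneg hp π x _)
      _ = b := by rw [← Finset.sum_mul, hmass, one_mul]

theorem cylProb_nonneg (n : ℕ) (E : (Fin n → A × S) → Prop) : 0 ≤ cylProb Adm p π x n E :=
  Finset.sum_nonneg fun v _ => by
    split_ifs
    exacts [pathProb_nonneg hp π x _, le_rfl]

theorem cylProb_mono {n : ℕ} {E E' : (Fin n → A × S) → Prop} (h : ∀ v, E v → E' v) :
    cylProb Adm p π x n E ≤ cylProb Adm p π x n E' :=
  Finset.sum_le_sum fun v _ => by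
    by_cases hv : E v
    · rw [if_pos hv, if_pos (h v hv)]
    · rw [if_neg hv]
      split_ifs
      exacts [pathProb_nonneg hp π x _, le_rfl]

omit hp in
theorem cylProb_congr {n : ℕ} {E E' : (Fin n → A × S) → Prop}
    (h : ∀ v, pathProb Adm p π x (List.ofFn v) ≠ 0 → (E v ↔ E' v)) :
    cylProb Adm p π x n E = cylProb Adm p π x n E' :=
  Finset.sum_congr rfl fun v _ => by
    by_cases hv : pathProb Adm p π x (List.ofFn v) = 0
    · simp [hv]
    · rw [if_congr (h v hv) rfl rfl]

omit hp in
theorem cylProb_or {n : ℕ} {E E' : (Fin n → A × S) → Prop} (hdisj : ∀ v, E v → ¬E' v) :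
    cylProb Adm p π x n (fun v => E v ∨ E' v) =
      cylProb Adm p π x n E + cylProb Adm p π x n E' := by
  simp only [cylProb, ← Finset.sum_add_distrib]
  refine Finset.sum_congr rfl fun v _ => ?_
  by_cases h : E v
  · simp [h, hdisj v h]
  · simp [h]

theorem cylProb_add_cylProb_not {n : ℕ} (E : (Fin n → A × S) → Prop) :
    cylProb Adm p π x n E + cylProb Adm p π x n (fun v => ¬E v) = 1 := by
  rw [← cylProb_or π x fun v h h' => h' h, ← sum_pathProb_eq_one hp π x n]
  exact Finset.sum_congr rfl fun v _ => if_pos (em _)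

omit hp in
theorem exists_pathProb_ne_zero_of_cylProb_ne_zero {n : ℕ} {E : (Fin n → A × S) → Prop}
    (h : cylProb Adm p π x n E ≠ 0) :
    ∃ v, E v ∧ pathProb Adm p π x (List.ofFn v) ≠ 0 := by
  obtain ⟨v, -, hv⟩ := Finset.exists_ne_zero_of_sum_ne_zero h
  by_cases hE : E v
  · exact ⟨v, hE, by rwa [if_pos hE] at hv⟩
  · exact absurd (if_neg hE) hv

theorem cylProb_succ_comp_castSucc {N : ℕ} (E : (Fin N → A × S) → Prop) :
    cylProb Adm p π x (N + 1) (fun v => E (fun t => v t.castSucc)) = cylProb Adm p π x N E := by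
  simp only [cylProb]
  rw [← (Fin.snocEquiv fun _ : Fin (N + 1) => A × S).sum_comp, Fintype.sum_prod_type,
    Finset.sum_comm]
  refine Finset.sum_congr rfl fun u _ => ?_
  have hofn : ∀ q : A × S,
      List.ofFn ((Fin.snocEquiv fun _ : Fin (N + 1) => A × S) (q, u)) = List.ofFn u ++ [q] :=
    fun q => by rw [List.ofFn_succ']; simp [Fin.snocEquiv]
  have hinit : ∀ q : A × S,
      (fun t : Fin N => (Fin.snocEquiv fun _ : Fin (N + 1) => A × S) (q, u) t.castSucc) = u :=
    fun q => funext fun t => by simp [Fin.snocEquiv]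
  simp only [hinit, hofn]
  -- summing out the last step: its weights `π(a | h, y) p_{y y'}(a)` have total mass one
  split_ifs
  · rw [← mul_one (pathProb Adm p π x (List.ofFn u)),
      ← sum_policy_mul_transition_eq_one hp (shiftPolicy Adm π (histOf x (List.ofFn u))) []
        (lastState x (List.ofFn u)), Finset.mul_sum]
    refine Finset.sum_congr rfl fun q _ => ?_
    rw [pathProb_append]
    simp [pathProb, pathProbAux]
  · exact Finset.sum_const_zero

theorem cylProb_stay_eq_add_firstExit (Q : S → Prop) (N : ℕ) :
    cylProb Adm p π x N (fun v => ∀ t, Q (v t).2) =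
      cylProb Adm p π x (N + 1) (fun v => ∀ t, Q (v t).2) +
        cylProb Adm p π x (N + 1) (FirstExit Q) := by
  rw [← cylProb_succ_comp_castSucc hp π x, ← cylProb_or π x fun v hstay hexit =>
    hexit.2.2 (Fin.last N) rfl (hstay _)]
  congr 1
  funext v
  refine propext ⟨fun hpre => ?_, ?_⟩
  · by_cases hlast : Q (v (Fin.last N)).2
    · exact Or.inl (Fin.lastCases hlast hpre)
    · refine Or.inr ⟨N.succ_pos, fun t ht => ?_, fun t ht => ?_⟩
      · exact hpre ⟨t, by omega⟩
      · rwa [show t = Fin.last N from Fin.ext (by simpa using ht)]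
  · rintro (hstay | ⟨-, hpre, -⟩) t
    exacts [hstay _, hpre t.castSucc (by simp)]

theorem tsum_cylProb_firstExit_eq_one (Q : S → Prop)
    (hstay : Tendsto (fun N => cylProb Adm p π x N (fun v => ∀ t, Q (v t).2)) atTop (𝓝 0)) :
    ∑' n, cylProb Adm p π x n (FirstExit Q) = 1 := by
  have hpartial : ∀ N, ∑ n ∈ Finset.range (N + 1), cylProb Adm p π x n (FirstExit Q) =
      1 - cylProb Adm p π x N (fun v => ∀ t, Q (v t).2) := by
    intro N
    induction N with
    | zero => simp [cylProb, FirstExit, pathProb, pathProbAux]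
    | succ N ih => rw [Finset.sum_range_succ, ih, cylProb_stay_eq_add_firstExit hp π x Q N]; ring
  refine ((hasSum_iff_tendsto_nat_of_nonneg (fun n => cylProb_nonneg hp π x n _) 1).2 ?_).tsum_eq
  rw [← tendsto_add_atTop_iff_nat 1]
  simpa [hpartial] using (tendsto_const_nhds (x := (1 : ℝ))).sub hstay

end Cylinders

theorem abs_div_natCast_le_of_abs_le_mul {f : ℕ → ℝ} {K : ℝ} (hf : ∀ n, |f n| ≤ n * K)
    (n : ℕ) :
    |f n / n| ≤ K := by
  rcases n.eq_zero_or_pos with rfl | hn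
  · simpa using (abs_nonneg _).trans (hf 1)
  · rw [abs_div, Nat.abs_cast, div_le_iff₀ (by positivity), mul_comm]
    exact hf n

theorem limsup_div_le_limsup_div {f g : ℕ → ℝ} {K κ : ℝ} {k : ℕ}
    (hf : ∀ n, |f n| ≤ n * K) (hg : ∀ n, |g n| ≤ n * K)
    (hfg : ∀ m, κ + g m ≤ f (k + m)) :
    limsup (fun m => g m / m) atTop ≤ limsup (fun n => f n / n) atTop := by
  have hK : 0 ≤ K := (abs_nonneg _).trans (abs_div_natCast_le_of_abs_le_mul hf 0)
  set D := |κ| + k * K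
  have hD : Tendsto (fun m : ℕ => D / m) atTop (𝓝 0) := tendsto_const_div_atTop_nhds_zero_nat D
  have hstep : ∀ m : ℕ, 0 < m → g m / m ≤ f (m + k) / ↑(m + k) + D / m := by
    intro m hm
    have hm' : (0 : ℝ) < m := by exact_mod_cast hm
    have hk : (0 : ℝ) ≤ k := Nat.cast_nonneg k
    have key : g m * (m + k) ≤ f (m + k) * m + D * (m + k) := by
      rw [add_comm m k]
      nlinarith [mul_le_mul_of_nonneg_right (abs_le.1 (hg m)).2 hk,
        mul_le_mul_of_nonneg_right (hfg m) hm'.le, mul_nonneg (by positivity : 0 ≤ D) hk,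
        mul_nonneg (neg_le_iff_add_nonneg.1 (neg_abs_le κ)) hm'.le]
    rw [Nat.cast_add, div_add_div _ _ (by positivity) hm'.ne',
      div_le_div_iff₀ hm' (by positivity)]
    nlinarith [mul_le_mul_of_nonneg_right key hm'.le]
  have hbdd : ∀ {u : ℕ → ℝ}, (∀ n, |u n| ≤ K) →
      IsBoundedUnder (· ≤ ·) atTop u ∧ IsBoundedUnder (· ≥ ·) atTop u := fun hu =>
    ⟨isBoundedUnder_of ⟨K, fun n => (abs_le.1 (hu n)).2⟩,
      isBoundedUnder_of ⟨-K, fun n => (abs_le.1 (hu n)).1⟩⟩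
  have hfk := hbdd fun m => abs_div_natCast_le_of_abs_le_mul hf (m + k)
  calc limsup (fun m => g m / m) atTop
      ≤ limsup ((fun m => f (m + k) / ↑(m + k)) + fun m : ℕ => D / m) atTop :=
        limsup_le_limsup (eventually_atTop.2 ⟨1, fun m hm => hstep m hm⟩)
          (hbdd (abs_div_natCast_le_of_abs_le_mul hg)).2.isCoboundedUnder_le
          (isBoundedUnder_le_add hfk.1 hD.isBoundedUnder_le)
    _ ≤ limsup (fun m => f (m + k) / ↑(m + k)) atTop + limsup (fun m : ℕ => D / m) atTop :=
        limsup_add_le hfk.2 hfk.1 hD.isBoundedUnder_ge.isCoboundedUnder_le hD.isBoundedUnder_le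
    _ = limsup (fun n => f n / n) atTop := by
        rw [hD.limsup_eq, add_zero, limsup_nat_add (fun n => f n / n) k]

noncomputable def costBound (C : S → A → ℝ) : ℝ := ∑ q : S × A, |C q.1 q.2|

theorem abs_le_costBound (s : S) (a : A) : |C s a| ≤ costBound C :=
  Finset.single_le_sum (f := fun q : S × A => |C q.1 q.2|) (fun _ _ => abs_nonneg _)
    (Finset.mem_univ (s, a))

theorem costBound_nonneg : 0 ≤ costBound C :=
  Finset.sum_nonneg fun _ _ => abs_nonneg _

noncomputable def expMoment (π : Policy S A Adm) (x : S) (n : ℕ) : ℝ :=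
  ∑ v : Fin n → A × S,
    pathProb Adm p π x (List.ofFn v) * Real.exp (lam * costSum C x (List.ofFn v))

section RiskSensitiveCost

variable {Adm p C lam} (hp : IsStochastic Adm p)
include hp

theorem expMoment_mem_Icc (π : Policy S A Adm) (x : S) (n : ℕ) :
    expMoment Adm p C lam π x n ∈
      Set.Icc (Real.exp (-(|lam| * (n * costBound C)))) (Real.exp (|lam| * (n * costBound C))) :=
  sum_pathProb_mul_mem_Icc hp π x fun v => by
    have hcost : |lam * costSum C x (List.ofFn v)| ≤ |lam| * (n * costBound C) := by
      rw [abs_mul]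
      refine mul_le_mul_of_nonneg_left ?_ (abs_nonneg lam)
      simpa using abs_costSum_le (abs_le_costBound C) x (List.ofFn v)
    exact ⟨Real.exp_le_exp.2 (abs_le.1 hcost).1, Real.exp_le_exp.2 (abs_le.1 hcost).2⟩

theorem expMoment_pos (π : Policy S A Adm) (x : S) (n : ℕ) :
    0 < expMoment Adm p C lam π x n :=
  (Real.exp_pos _).trans_le (expMoment_mem_Icc hp π x n).1

omit hp in
theorem Jn_eq_log_expMoment (π : Policy S A Adm) (x : S) (n : ℕ) :
    Jn Adm p C lam π x n = 1 / lam * Real.log (expMoment Adm p C lam π x n) := rfl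

theorem abs_Jn_le (π : Policy S A Adm) (x : S) (n : ℕ) :
    |Jn Adm p C lam π x n| ≤ n * costBound C := by
  have hmem := expMoment_mem_Icc (C := C) (lam := lam) hp π x n
  have hpos := expMoment_pos (C := C) (lam := lam) hp π x n
  have hlog : |Real.log (expMoment Adm p C lam π x n)| ≤ |lam| * (n * costBound C) :=
    abs_le.2 ⟨(Real.le_log_iff_exp_le hpos).2 hmem.1, (Real.log_le_iff_le_exp hpos).2 hmem.2⟩
  rw [Jn_eq_log_expMoment]
  rcases eq_or_ne lam 0 with rfl | hlam
  · simpa using mul_nonneg n.cast_nonneg (costBound_nonneg C)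
  · rwa [abs_mul, one_div, abs_inv, inv_mul_le_iff₀ (abs_pos.2 hlam)]

theorem neg_costBound_le_Javg (π : Policy S A Adm) (x : S) :
    -costBound C ≤ Javg Adm p C lam π x := by
  have hbd := fun n =>
    abs_le.1 (abs_div_natCast_le_of_abs_le_mul (abs_Jn_le (C := C) (lam := lam) hp π x) n)
  exact le_limsup_of_frequently_le (Frequently.of_forall fun n => (hbd n).1)
    (isBoundedUnder_of ⟨_, fun n => (hbd n).2⟩)

theorem Jopt_le_Javg (π : Policy S A Adm) (x : S) : Jopt Adm p C lam x ≤ Javg Adm p C lam π x :=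
  ciInf_le ⟨_, Set.forall_mem_range.2 fun π' => neg_costBound_le_Javg hp π' x⟩ π

theorem expMoment_prefix_le (π : Policy S A Adm) (x : S) (l : List (A × S)) (m : ℕ) :
    pathProb Adm p π x l * Real.exp (lam * costSum C x l) *
        expMoment Adm p C lam (shiftPolicy Adm π (histOf x l)) (lastState x l) m ≤
      expMoment Adm p C lam π x (l.length + m) := by
  classical
  have hinj : Set.InjOn (fun r : Fin m → A × S => Fin.append l.get r)
      ((Finset.univ : Finset (Fin m → A × S)) : Set (Fin m → A × S)) :=
    fun r₁ _ r₂ _ h => funext fun i => by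
      simpa using congrFun h (Fin.natAdd l.length i)
  unfold expMoment
  rw [Finset.mul_sum]
  refine le_of_eq_of_le ?_ (Finset.sum_le_univ_sum_of_nonneg
    (s := (Finset.univ : Finset (Fin m → A × S)).image fun r => Fin.append l.get r)
    fun v => mul_nonneg (pathProb_nonneg hp π x _) (Real.exp_pos _).le)
  rw [Finset.sum_image hinj]
  refine Finset.sum_congr rfl fun r _ => ?_
  rw [List.ofFn_fin_append, List.ofFn_get, pathProb_append, costSum_append, mul_add,
    Real.exp_add]
  ring

theorem log_prefix_add_Jn_shiftPolicy_le (hlam : 0 < lam) (π : Policy S A Adm) (x : S)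
    {l : List (A × S)} (hl : pathProb Adm p π x l ≠ 0) (m : ℕ) :
    1 / lam * Real.log (pathProb Adm p π x l * Real.exp (lam * costSum C x l)) +
        Jn Adm p C lam (shiftPolicy Adm π (histOf x l)) (lastState x l) m ≤
      Jn Adm p C lam π x (l.length + m) := by
  have hprefix : 0 < pathProb Adm p π x l * Real.exp (lam * costSum C x l) :=
    mul_pos ((pathProb_nonneg hp π x l).lt_of_ne' hl) (Real.exp_pos _)
  have hmoment := expMoment_pos (C := C) (lam := lam) hp (shiftPolicy Adm π (histOf x l))
    (lastState x l) m
  rw [Jn_eq_log_expMoment, Jn_eq_log_expMoment, ← mul_add,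
    ← Real.log_mul hprefix.ne' hmoment.ne']
  exact mul_le_mul_of_nonneg_left
    (Real.log_le_log (mul_pos hprefix hmoment) (expMoment_prefix_le hp π x l m))
    (by positivity)

theorem Javg_shiftPolicy_le (hlam : 0 < lam) (π : Policy S A Adm) (x : S)
    {l : List (A × S)} (hl : pathProb Adm p π x l ≠ 0) :
    Javg Adm p C lam (shiftPolicy Adm π (histOf x l)) (lastState x l) ≤ Javg Adm p C lam π x :=
  limsup_div_le_limsup_div (abs_Jn_le hp π x) (abs_Jn_le hp _ _)
    (log_prefix_add_Jn_shiftPolicy_le hp hlam π x hl)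

theorem Jopt_lastState_le_Javg (hlam : 0 < lam) (π : Policy S A Adm) (x : S)
    {l : List (A × S)} (hl : pathProb Adm p π x l ≠ 0) :
    Jopt Adm p C lam (lastState x l) ≤ Javg Adm p C lam π x :=
  (Jopt_le_Javg hp _ _).trans (Javg_shiftPolicy_le hp hlam π x hl)

theorem exists_pathProb_ne_zero_lastState_eq {π : Policy S A Adm} {x z : S} {n : ℕ}
    (h : survProb Adm p π x z n < 1) :
    ∃ l, pathProb Adm p π x l ≠ 0 ∧ lastState x l = z := by
  have hvisit : cylProb Adm p π x n (fun v => ¬∀ t, (v t).2 ≠ z) ≠ 0 := by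
    have := cylProb_add_cylProb_not hp π x fun v : Fin n → A × S => ∀ t, (v t).2 ≠ z
    rw [survProb] at h
    linarith
  obtain ⟨v, hv, hP⟩ := exists_pathProb_ne_zero_of_cylProb_ne_zero π x hvisit
  obtain ⟨t, ht⟩ := not_forall.1 hv
  refine ⟨(List.ofFn v).take (t + 1), pathProb_ne_zero_of_append π x
    (l₂ := (List.ofFn v).drop (t + 1)) (by rwa [List.take_append_drop]),
    not_not.1 ht ▸ lastState_take_succ x v t⟩

theorem Jopt_le_of_tendsto_survProb [Nonempty (Policy S A Adm)] (hlam : 0 < lam) {y z : S}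
    (hsurv : ∀ π, Tendsto (survProb Adm p π y z) atTop (𝓝 0)) :
    Jopt Adm p C lam z ≤ Jopt Adm p C lam y :=
  le_ciInf fun π => by
    obtain ⟨n, hn⟩ := ((hsurv π).eventually_lt_const one_pos).exists
    obtain ⟨l, hl, rfl⟩ := exists_pathProb_ne_zero_lastState_eq hp hn
    exact Jopt_lastState_le_Javg hp hlam π y hl

end RiskSensitiveCost

variable {Adm p C lam} in
theorem Jopt_add_lt_of_lt_xi1 {ε : ℝ} (hε : ε < xi1 Adm p C lam) {u v : S}
    (huv : Jopt Adm p C lam u < Jopt Adm p C lam v) :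
    Jopt Adm p C lam u + ε < Jopt Adm p C lam v := by
  rw [xi1, if_neg fun h => huv.ne (h u v)] at hε
  have hgap : ε < Jopt Adm p C lam v - Jopt Adm p C lam u :=
    hε.trans_le
      (csInf_le ⟨0, fun _ ⟨_, _, h, hd⟩ => hd ▸ (sub_pos.2 h).le⟩ ⟨u, v, huv, rfl⟩)
  linarith

theorem exits_to_lower_level
    (hp : ∀ (x : S), ∀ a ∈ Adm x, (∀ y, 0 ≤ p x a y) ∧ (∑ y, p x a y) = 1)
    (hlam : 0 < lam) (α : ℝ)
    (z : S)
    (β β₀ : ℝ) (hβ : β ∈ Set.Ioo (0 : ℝ) 1)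
    (hTail : ∀ (x : S) (π : Policy S A Adm) (n : ℕ),
      survProb Adm p π x z n ≤ β₀ * β ^ (n + 1))
    (x : S) (hx : (⨅ y : S, Jopt Adm p C lam y) < Jopt Adm p C lam x)
    (ε : ℝ) (hε : ε ∈ Set.Ioo 0 (xi Adm p C lam α β))
    (π : Policy S A Adm) (hopt : EpsOptimalAt Adm p C lam π x ε) :
    (∑' n : ℕ, cylProb Adm p π x n
      (fun v => FirstExit (fun y => Jopt Adm p C lam y = Jopt Adm p C lam x) v ∧
        Jopt Adm p C lam (stateAt x (List.ofFn v) n) < Jopt Adm p C lam x)) = 1 := by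
  have hgeom : Tendsto (fun n : ℕ => β₀ * β ^ (n + 1)) atTop (𝓝 0) := by
    simpa using ((tendsto_pow_atTop_nhds_zero_of_lt_one hβ.1.le hβ.2).comp
      (tendsto_add_atTop_nat 1)).const_mul β₀
  have hsurv : ∀ y (π' : Policy S A Adm), Tendsto (survProb Adm p π' y z) atTop (𝓝 0) :=
    fun y π' => squeeze_zero (fun n => cylProb_nonneg hp π' y n _) (hTail y π') hgeom
  have : Nonempty S := ⟨x⟩
  have : Nonempty (Policy S A Adm) := ⟨π⟩
  have hzx : Jopt Adm p C lam z < Jopt Adm p C lam x :=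
    (le_ciInf fun y => Jopt_le_of_tendsto_survProb hp hlam (hsurv y)).trans_lt hx
  have hnot_up : ∀ l, pathProb Adm p π x l ≠ 0 →
      ¬Jopt Adm p C lam x < Jopt Adm p C lam (lastState x l) := fun l hl hup =>
    ((Jopt_lastState_le_Javg hp hlam π x hl).trans hopt).not_gt
      (Jopt_add_lt_of_lt_xi1 (hε.2.trans_le (min_le_right _ _)) hup)
  have hstay : ∀ N, cylProb Adm p π x N (fun v => ∀ t, Jopt Adm p C lam (v t).2 =
      Jopt Adm p C lam x) ≤ survProb Adm p π x z N :=
    fun N => cylProb_mono hp π x fun v hv t hz => hzx.ne (hz ▸ hv t)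
  refine (tsum_congr fun n => cylProb_congr π x fun v hv => ?_).trans
    (tsum_cylProb_firstExit_eq_one hp π x (fun y => Jopt Adm p C lam y = Jopt Adm p C lam x)
      (squeeze_zero (fun N => cylProb_nonneg hp π x N _) hstay (hsurv x π)))
  rw [stateAt_eq_lastState, and_iff_left_iff_imp]
  exact fun hexit => lt_of_le_of_ne (not_lt.1 (hnot_up _ hv)) (hexit.not_lastState x)

end RiskSensitive
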